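/- arXiv:1103.3626 — 2 statements merged into one kernel-verified Lean document; each statement's English description precedes it below -/
import Mathlib

section
/- Let v = 3m be odd and a_i, b_i ∈ {-1,1} with PSD_A(s)+PSD_B(s) = 2v-2 for all s = 1,...,v-1 and = 4v-2 at s = 0. Setting A_j = Σ_{i=0}^{m-1} a_{3i+j} and B_j = Σ_{i=0}^{m-1} b_{3i+j} for j = 0,1,2, one has A_0² + A_1² + A_2² + B_0² + B_1² + B_2² = 8m - 2. -/
noncomputable def PSD (v : ℕ) (x : ℕ → ℝ) (k : ℕ) : ℝ :=
  ‖(∑ α ∈ Finset.range v, (x α : ℂ)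
    * Complex.exp (2 * (Real.pi : ℂ) * Complex.I * α * k / v))‖ ^ 2

/-!
With `ω = exp (2πi/3)`, the frequency `s = m` of a sequence of length `3m` only sees the residue
classes mod 3: the DFT there is `X₀ + X₁ ω + X₂ ω²`, whose squared modulus is
`X₀² + X₁² + X₂² - X₀X₁ - X₁X₂ - X₂X₀`, while the DFT at `0` is `X₀ + X₁ + X₂`. Hence
`2 PSD(m) + PSD(0) = 3 (X₀² + X₁² + X₂²)`, and adding this for `a` and `b` gives
`3 ∑ (A_j² + B_j²) = 2 (2v - 2) + (4v - 2) = 3 (8m - 2)`.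
-/

open Finset Complex ComplexConjugate

def residueSum {M : Type*} [AddCommMonoid M] (k m : ℕ) (x : ℕ → M) (j : ℕ) : M :=
  ∑ i ∈ range m, x (k * i + j)

theorem sum_range_mul_eq_sum_residueSum {M : Type*} [AddCommMonoid M] (k m : ℕ) (x : ℕ → M) :
    ∑ α ∈ range (k * m), x α = ∑ j ∈ range k, residueSum k m x j := by
  induction m with
  | zero => simp [residueSum]
  | succ m ih =>
    simp only [residueSum] at ih ⊢
    simp only [Nat.mul_succ, sum_range_add, ih, sum_range_succ, sum_add_distrib]

theorem sum_range_mul_mul_pow_of_pow_eq_one {R : Type*} [CommSemiring R] {ζ : R} {k : ℕ}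
    (hζ : ζ ^ k = 1) (m : ℕ) (x : ℕ → R) :
    ∑ α ∈ range (k * m), x α * ζ ^ α = ∑ j ∈ range k, residueSum k m x j * ζ ^ j := by
  rw [sum_range_mul_eq_sum_residueSum]
  refine sum_congr rfl fun j _ => ?_
  rw [residueSum, residueSum, sum_mul]
  refine sum_congr rfl fun i _ => ?_
  rw [pow_add, pow_mul, hζ, one_pow, one_mul]

theorem exp_two_pi_I_mul_div_mul {k m : ℕ} (hm : m ≠ 0) (α : ℕ) :
    exp (2 * π * I * α * m / ((k * m : ℕ) : ℂ)) = exp (2 * π * I / k) ^ α := by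
  rw [← exp_nat_mul]
  congr 1
  push_cast
  field_simp

theorem IsPrimitiveRoot.norm_sq_add_mul_add_mul_sq {ω : ℂ} (hω : IsPrimitiveRoot ω 3)
    (x y z : ℝ) :
    ‖(x : ℂ) + y * ω + z * ω ^ 2‖ ^ 2 = x ^ 2 + y ^ 2 + z ^ 2 - x * y - y * z - z * x := by
  have hsum : 1 + ω + ω ^ 2 = 0 := by
    simpa [sum_range_succ] using hω.geom_sum_eq_zero (by norm_num)
  have hconj : conj ω = ω ^ 2 := by
    rw [← inv_eq_conj (norm_eq_one_of_pow_eq_one hω.pow_eq_one (by norm_num))]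
    exact inv_eq_of_mul_eq_one_right (by rw [← pow_succ']; exact hω.pow_eq_one)
  apply ofReal_injective
  rw [Complex.sq_norm, ← mul_conj]
  simp only [map_add, map_mul, conj_ofReal, map_pow, hconj]
  push_cast
  linear_combination ((y ^ 2 + z ^ 2) * (ω - 1) + x * y + x * z + y * z * (ω ^ 2 - ω + 1)) * hsum
    + (x * z * ω + y * z * ω ^ 2 + z ^ 2 * ω ^ 3) * hω.pow_eq_one

theorem PSD_zero (v : ℕ) (x : ℕ → ℝ) : PSD v x 0 = (∑ α ∈ range v, x α) ^ 2 := by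
  simp [PSD, ← ofReal_sum, norm_real]

theorem PSD_three_mul_self {m : ℕ} (hm : m ≠ 0) (x : ℕ → ℝ) :
    PSD (3 * m) x m = residueSum 3 m x 0 ^ 2 + residueSum 3 m x 1 ^ 2 + residueSum 3 m x 2 ^ 2
      - residueSum 3 m x 0 * residueSum 3 m x 1 - residueSum 3 m x 1 * residueSum 3 m x 2
      - residueSum 3 m x 2 * residueSum 3 m x 0 := by
  have hω := isPrimitiveRoot_exp 3 three_ne_zero
  have hcast : ∀ j, residueSum 3 m (fun α => (x α : ℂ)) j = residueSum 3 m x j := fun j => by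
    simp [residueSum]
  rw [PSD]
  simp only [exp_two_pi_I_mul_div_mul hm]
  rw [sum_range_mul_mul_pow_of_pow_eq_one hω.pow_eq_one]
  simp only [sum_range_succ, sum_range_zero, hcast]
  rw [← hω.norm_sq_add_mul_add_mul_sq]
  simp

theorem stmt8_general (v m : ℕ) (hv0 : 0 < v) (hdm : v = 3 * m)
    (a b : ℕ → ℝ)
    (hpsd : ∀ s : ℕ, 1 ≤ s → s ≤ v - 1 → PSD v a s + PSD v b s = 2 * v - 2)
    (hpsd0 : PSD v a 0 + PSD v b 0 = 4 * v - 2)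
    (A B : ℕ → ℝ)
    (hA : ∀ j, A j = ∑ i ∈ Finset.range m, a (3 * i + j))
    (hB : ∀ j, B j = ∑ i ∈ Finset.range m, b (3 * i + j)) :
    A 0 ^ 2 + A 1 ^ 2 + A 2 ^ 2 + B 0 ^ 2 + B 1 ^ 2 + B 2 ^ 2 = 8 * m - 2 := by
  subst hdm
  obtain rfl : A = residueSum 3 m a := funext hA
  obtain rfl : B = residueSum 3 m b := funext hB
  have hm : m ≠ 0 := by omega
  have hthird := hpsd m (by omega) (by omega)
  rw [PSD_three_mul_self hm, PSD_three_mul_self hm] at hthird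
  rw [PSD_zero, PSD_zero, sum_range_mul_eq_sum_residueSum,
    sum_range_mul_eq_sum_residueSum] at hpsd0
  simp only [sum_range_succ, sum_range_zero, zero_add] at hpsd0
  push_cast at hthird hpsd0
  linear_combination (2 / 3 : ℝ) * hthird + (1 / 3 : ℝ) * hpsd0

/-- Vertical constraint for `v = 3m`. -/
theorem stmt8 (v m : ℕ) (hv : Odd v) (hv0 : 0 < v) (hdm : v = 3 * m)
    (a b : ℕ → ℝ)
    (ha : ∀ i, a i = -1 ∨ a i = 1) (hb : ∀ i, b i = -1 ∨ b i = 1)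
    (hpsd : ∀ s : ℕ, 1 ≤ s → s ≤ v - 1 → PSD v a s + PSD v b s = 2 * v - 2)
    (hpsd0 : PSD v a 0 + PSD v b 0 = 4 * v - 2)
    (A B : ℕ → ℝ)
    (hA : ∀ j, A j = ∑ i ∈ Finset.range m, a (3 * i + j))
    (hB : ∀ j, B j = ∑ i ∈ Finset.range m, b (3 * i + j)) :
    A 0 ^ 2 + A 1 ^ 2 + A 2 ^ 2 + B 0 ^ 2 + B 1 ^ 2 + B 2 ^ 2 = 8 * m - 2 :=
  stmt8_general v m hv0 hdm a b hpsd hpsd0 A B hA hB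
end

section
/- Let v = 3d be odd and a_i, b_i ∈ {-1,1} with PSD_A(s)+PSD_B(s) = 2v-2 for all s = 1,...,v-1 and = 4v-2 at s = 0. Setting A_i = a_i + a_{i+d} + a_{i+2d} and B_i = b_i + b_{i+d} + b_{i+2d} for i = 0,...,d-1, one has Σ_{i=0}^{d-1} (A_i² + B_i²) = 2v + 4. -/
/-!
At the frequencies `s = 3t` the spectrum of a sequence of length `v = 3d` only sees the folded
sequence `A_i = a_i + a_{i+d} + a_{i+2d}`: `PSD_a(3t)` is the squared modulus of the length-`d`
DFT of `A` at `t`. Parseval's identity for that DFT gives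
`∑_{t<d} (PSD_a(3t) + PSD_b(3t)) = d ∑_{i<d} (A_i² + B_i²)`, while the hypotheses evaluate the
left side to `(4v - 2) + (d - 1)(2v - 2) = d(2v + 4)`.
-/

open Finset ComplexConjugate

namespace IsPrimitiveRoot

variable {ζ : ℂ} {n : ℕ}

theorem sum_pow_mul_conj_pow (hζ : IsPrimitiveRoot ζ n) {i j : ℕ} (hi : i < n) (hj : j < n) :
    ∑ t ∈ range n, ζ ^ (i * t) * conj (ζ ^ (j * t)) = if i = j then (n : ℂ) else 0 := by
  have hconj : conj ζ = ζ⁻¹ := (Complex.inv_eq_conj (hζ.norm'_eq_one (by omega))).symm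
  have hterm : ∀ t, ζ ^ (i * t) * conj (ζ ^ (j * t)) = (ζ ^ i / ζ ^ j) ^ t := fun t => by
    rw [map_pow, hconj, div_pow, ← pow_mul, ← pow_mul, inv_pow, div_eq_mul_inv]
  simp_rw [hterm]
  split_ifs with hij
  · simp [hij, hζ.ne_zero (by omega)]
  · have hw : ζ ^ i / ζ ^ j ≠ 1 := fun h =>
      hij <| hζ.pow_inj hi hj <|
        (div_eq_one_iff_eq (pow_ne_zero _ (hζ.ne_zero (by omega)))).mp h
    rw [geom_sum_eq hw, div_pow, ← pow_mul, ← pow_mul, mul_comm i, mul_comm j, pow_mul,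
      pow_mul, hζ.pow_eq_one, one_pow, one_pow, div_one, sub_self, zero_div]

theorem sum_norm_sq_sum_mul_pow (hζ : IsPrimitiveRoot ζ n) (c : ℕ → ℂ) :
    ∑ t ∈ range n, ‖∑ i ∈ range n, c i * ζ ^ (i * t)‖ ^ 2
      = n * ∑ i ∈ range n, ‖c i‖ ^ 2 := by
  apply Complex.ofReal_injective
  push_cast
  simp_rw [← Complex.mul_conj', map_sum, map_mul, sum_mul_sum, mul_sum]
  rw [sum_comm]
  refine sum_congr rfl fun i hi => ?_
  rw [sum_comm]
  simp_rw [mul_mul_mul_comm (c i) (ζ ^ _), ← mul_sum]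
  rw [sum_eq_single i]
  · rw [hζ.sum_pow_mul_conj_pow (mem_range.mp hi) (mem_range.mp hi), if_pos rfl, mul_comm]
  · intro j hj hji
    rw [hζ.sum_pow_mul_conj_pow (mem_range.mp hi) (mem_range.mp hj), if_neg (Ne.symm hji),
      mul_zero]
  · exact fun h => absurd hi h

end IsPrimitiveRoot

theorem sum_range_mul_eq_sum_sum {M : Type*} [AddCommMonoid M] (f : ℕ → M) (m d : ℕ) :
    ∑ α ∈ range (m * d), f α = ∑ i ∈ range d, ∑ j ∈ range m, f (i + j * d) := by
  rw [sum_comm]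
  induction m with
  | zero => simp
  | succ m ih =>
    rw [add_mul, one_mul, sum_range_add, ih, sum_range_succ]
    simp only [add_comm (m * d)]

theorem sum_mul_pow_eq_sum_fold {R : Type*} [CommSemiring R] {ω : R} {d : ℕ} (hω : ω ^ d = 1)
    (y : ℕ → R) (m t : ℕ) :
    ∑ α ∈ range (m * d), y α * ω ^ (α * t)
      = ∑ i ∈ range d, (∑ j ∈ range m, y (i + j * d)) * ω ^ (i * t) := by
  rw [sum_range_mul_eq_sum_sum]
  refine sum_congr rfl fun i _ => ?_
  rw [sum_mul]
  refine sum_congr rfl fun j _ => ?_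
  rw [show (i + j * d) * t = i * t + d * (j * t) by ring, pow_add, pow_mul ω d, hω, one_pow,
    mul_one]

theorem PSD_eq_norm_sq (v : ℕ) (x : ℕ → ℝ) (k : ℕ) :
    PSD v x k = ‖∑ α ∈ range v,
      (x α : ℂ) * Complex.exp (2 * (Real.pi : ℂ) * Complex.I / v) ^ (α * k)‖ ^ 2 := by
  unfold PSD
  congr 2
  refine sum_congr rfl fun α _ => ?_
  rw [← Complex.exp_nat_mul]
  push_cast
  ring_nf

theorem PSD_mul_eq_norm_sq_fold {m d : ℕ} (hm : m ≠ 0) (x : ℕ → ℝ) (t : ℕ) :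
    PSD (m * d) x (m * t) = ‖∑ i ∈ range d, ((∑ j ∈ range m, x (i + j * d) : ℝ) : ℂ)
      * Complex.exp (2 * (Real.pi : ℂ) * Complex.I / d) ^ (i * t)‖ ^ 2 := by
  set ω := Complex.exp (2 * (Real.pi : ℂ) * Complex.I / d)
  have hroot : Complex.exp (2 * (Real.pi : ℂ) * Complex.I / (m * d : ℕ)) ^ m = ω := by
    rw [← Complex.exp_nat_mul, Nat.cast_mul, mul_div_assoc',
      mul_div_mul_left _ _ (by exact_mod_cast hm)]
  have hω : ω ^ d = 1 := by
    rcases Nat.eq_zero_or_pos d with rfl | hd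
    · exact pow_zero ω
    · exact (Complex.isPrimitiveRoot_exp d hd.ne').pow_eq_one
  rw [PSD_eq_norm_sq]
  simp_rw [mul_left_comm _ m, pow_mul _ m, hroot]
  push_cast
  rw [sum_mul_pow_eq_sum_fold hω (fun α => (x α : ℂ))]

theorem sum_PSD_mul {m d : ℕ} (hm : m ≠ 0) (hd : d ≠ 0) (x : ℕ → ℝ) :
    ∑ t ∈ range d, PSD (m * d) x (m * t)
      = d * ∑ i ∈ range d, (∑ j ∈ range m, x (i + j * d)) ^ 2 := by
  simp_rw [PSD_mul_eq_norm_sq_fold hm, (Complex.isPrimitiveRoot_exp d hd).sum_norm_sq_sum_mul_pow,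
    Complex.norm_real, Real.norm_eq_abs, sq_abs]

theorem stmt9_general (v d : ℕ) (hv0 : 0 < v) (hdm : v = 3 * d)
    (a b : ℕ → ℝ)
    (hpsd : ∀ s : ℕ, 1 ≤ s → s ≤ v - 1 → PSD v a s + PSD v b s = 2 * v - 2)
    (hpsd0 : PSD v a 0 + PSD v b 0 = 4 * v - 2) :
    ∑ i ∈ Finset.range d,
        ((a i + a (i + d) + a (i + 2 * d)) ^ 2 + (b i + b (i + d) + b (i + 2 * d)) ^ 2)
      = 2 * (v : ℝ) + 4 := by
  subst hdm
  have hd : d ≠ 0 := by omega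
  have htriple (x : ℕ → ℝ) (i : ℕ) :
      ∑ j ∈ range 3, x (i + j * d) = x i + x (i + d) + x (i + 2 * d) := by
    simp [sum_range_succ]
  have hparseval : ∑ t ∈ range d, (PSD (3 * d) a (3 * t) + PSD (3 * d) b (3 * t))
      = d * ∑ i ∈ range d,
        ((a i + a (i + d) + a (i + 2 * d)) ^ 2 + (b i + b (i + d) + b (i + 2 * d)) ^ 2) := by
    rw [sum_add_distrib, sum_PSD_mul three_ne_zero hd, sum_PSD_mul three_ne_zero hd, ← mul_add,
      ← sum_add_distrib]
    simp only [htriple]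
  have hvalues : ∑ t ∈ range d, (PSD (3 * d) a (3 * t) + PSD (3 * d) b (3 * t))
      = (4 * (3 * d : ℕ) - 2) + (d - 1 : ℕ) * (2 * (3 * d : ℕ) - 2) := by
    have h0 : 0 ∈ range d := mem_range.mpr (Nat.pos_of_ne_zero hd)
    rw [← add_sum_erase _ _ h0, mul_zero, hpsd0,
      sum_congr rfl fun t ht => hpsd (3 * t) (by simp at ht; omega) (by simp at ht; omega),
      sum_const, card_erase_of_mem h0, card_range, nsmul_eq_mul]
  refine mul_left_cancel₀ (Nat.cast_ne_zero.mpr hd : (d : ℝ) ≠ 0) ?_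
  rw [← hparseval, hvalues, Nat.cast_pred (Nat.pos_of_ne_zero hd)]
  push_cast
  ring

/-- Horizontal constraint for `v = 3d`. -/
theorem stmt9 (v d : ℕ) (hv : Odd v) (hv0 : 0 < v) (hdm : v = 3 * d)
    (a b : ℕ → ℝ)
    (ha : ∀ i, a i = -1 ∨ a i = 1) (hb : ∀ i, b i = -1 ∨ b i = 1)
    (hpsd : ∀ s : ℕ, 1 ≤ s → s ≤ v - 1 → PSD v a s + PSD v b s = 2 * v - 2)
    (hpsd0 : PSD v a 0 + PSD v b 0 = 4 * v - 2) :
    ∑ i ∈ Finset.range d,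
        ((a i + a (i + d) + a (i + 2 * d)) ^ 2 + (b i + b (i + d) + b (i + 2 * d)) ^ 2)
      = 2 * (v : ℝ) + 4 :=
  stmt9_general v d hv0 hdm a b hpsd hpsd0
end
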